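/- For every θ > 0 and every n ≥ 2, the depth D_n^{(θ)} of the n-th inserted node in a Hoppe tree with parameter θ has variance Var(D_n^{(θ)}) = Σ_{i=1}^{n-2} 1/(θ + i) − Σ_{i=1}^{n-2} (1/(θ + i))². -/

import Mathlib

open MeasureTheory ProbabilityTheory Real Filter Topology

noncomputable section

/-- Depth of node `i` in the Hoppe tree grown from the parent choices `U`:
`U k ω` is the parent of node `k + 2` (a node in `{1, …, k + 1}`, almost surely);
node `1` is the root. The `min` clipping is irrelevant almost surely. -/
def hoppeDepth {Ω : Type*} (U : ℕ → Ω → ℕ) (ω : Ω) : ℕ → ℕ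
  | 0 => 0
  | 1 => 0
  | n + 2 => hoppeDepth U ω (min (U n ω) (n + 1)) + 1
  decreasing_by omega

/-- The parent choices of a Hoppe tree with parameter `θ`: `U k` is the (random) parent
of node `k + 2`, the choices being independent, node `k + 2` choosing its parent among
nodes `1, …, k + 1`, namely the root `1` with probability `θ / (θ + k)` and each other
node with probability `1 / (θ + k)`. -/
structure IsHoppeParents {Ω : Type*} [MeasurableSpace Ω] (θ : ℝ) (μ : Measure Ω)
    (U : ℕ → Ω → ℕ) : Prop where
  meas : ∀ k, Measurable (U k)
  indep : iIndepFun U μ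
  root : ∀ k : ℕ, μ {ω | U k ω = 1} = ENNReal.ofReal (θ / (θ + k))
  nonroot : ∀ k j : ℕ, 2 ≤ j → j ≤ k + 1 → μ {ω | U k ω = j} = ENNReal.ofReal (1 / (θ + k))
  range : ∀ k : ℕ, μ {ω | 1 ≤ U k ω ∧ U k ω ≤ k + 1} = 1

/-- Height of the Hoppe tree with `n` nodes: maximal depth over nodes `1, …, n`. -/
def hoppeHeight {Ω : Type*} (U : ℕ → Ω → ℕ) (ω : Ω) (n : ℕ) : ℕ :=
  (Finset.Icc 1 n).sup (fun i => hoppeDepth U ω i)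

/-- Internal path length of the Hoppe tree with `n` nodes: sum of the depths of
nodes `1, …, n`. -/
def hoppePathLength {Ω : Type*} (U : ℕ → Ω → ℕ) (ω : Ω) (n : ℕ) : ℕ :=
  ∑ i ∈ Finset.Icc 1 n, hoppeDepth U ω i

/-- Number of leaves of the Hoppe tree with `n` nodes: nodes `j ∈ {1, …, n}` that are
the parent of no node `k ∈ {2, …, n}`. -/
def hoppeLeafCount {Ω : Type*} (U : ℕ → Ω → ℕ) (ω : Ω) (n : ℕ) : ℕ :=
  (@Finset.filter _ (fun j => ∀ k ∈ Finset.Icc 2 n, U (k - 2) ω ≠ j) (fun _ => Finset.decidableDforallFinset)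
    (Finset.Icc 1 n)).card

/-!
Conditioning on the parent of node `n + 2`, which is independent of the depths of the earlier
nodes, gives `(θ + n) 𝔼 ψ(D_{n+2}) = θ ψ(1) + ∑_{j=2}^{n+1} 𝔼 ψ(D_j + 1)`. Subtracting this
identity for `n` from the one for `n + 1` shows that `D_{n+3}` has the law of `D_{n+2} + B` with
`B` an independent Bernoulli variable of parameter `p = 1 / (θ + n + 1)`. So `D_{n+2}` is
distributed as `1 + B_1 + ⋯ + B_n` with independent `B_i ~ Bernoulli(1 / (θ + i))`, and its
variance is `∑ p_i (1 - p_i)`; the proof tracks the first two moments through this recursion.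
-/

open Finset

section RandomIndex

variable {Ω α : Type*} [MeasurableSpace Ω] [MeasurableSpace α] [MeasurableSingletonClass α]
  {μ : Measure Ω}

theorem integral_apply_eq_sum_of_indepFun [IsFiniteMeasure μ] {X : Ω → α} {Y : α → Ω → ℝ}
    {s : Finset α} (hX : Measurable X) (hXs : ∀ᵐ ω ∂μ, X ω ∈ s)
    (hY : ∀ j ∈ s, Integrable (Y j) μ) (hXY : ∀ j ∈ s, IndepFun X (Y j) μ) :
    ∫ ω, Y (X ω) ω ∂μ = ∑ j ∈ s, μ.real {ω | X ω = j} * ∫ ω, Y j ω ∂μ := by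
  classical
  have hXj : ∀ j, MeasurableSet {ω | X ω = j} := fun j => hX (measurableSet_singleton j)
  have hsplit : (fun ω => Y (X ω) ω)
      =ᵐ[μ] fun ω => ∑ j ∈ s, {ω | X ω = j}.indicator 1 ω * Y j ω := by
    filter_upwards [hXs] with ω hω
    simp [Set.indicator_apply, hω]
  rw [integral_congr_ae hsplit, integral_finsetSum]
  · refine Finset.sum_congr rfl fun j hj => ?_
    have hind : IndepFun ({ω | X ω = j}.indicator (1 : Ω → ℝ)) (Y j) μ := by
      have := (hXY j hj).comp
        (Measurable.indicator (f := (1 : α → ℝ)) measurable_one (measurableSet_singleton j))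
        measurable_id
      exact this
    rw [hind.integral_fun_mul_eq_mul_integral
      (measurable_one.indicator (hXj j)).aestronglyMeasurable (hY j hj).aestronglyMeasurable,
      integral_indicator_one (hXj j)]
  · intro j hj
    simpa only [← Set.indicator_mul_left, Pi.one_apply, one_mul] using (hY j hj).indicator (hXj j)

end RandomIndex

section Depth

variable {Ω : Type*} (U : ℕ → Ω → ℕ)

theorem hoppeDepth_one (ω : Ω) : hoppeDepth U ω 1 = 0 := by
  rw [hoppeDepth.eq_2]

theorem hoppeDepth_two (ω : Ω) : hoppeDepth U ω 2 = 1 := by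
  rw [hoppeDepth]
  rcases Nat.le_one_iff_eq_zero_or_eq_one.mp (min_le_right (U 0 ω) 1) with h | h <;>
    rw [h, hoppeDepth]

theorem hoppeDepth_add_two_of_le {ω : Ω} {n : ℕ} (h : U n ω ≤ n + 1) :
    hoppeDepth U ω (n + 2) = hoppeDepth U ω (U n ω) + 1 := by
  rw [hoppeDepth, min_eq_left h]

theorem hoppeDepth_le (ω : Ω) (m : ℕ) : hoppeDepth U ω m ≤ m := by
  induction m using hoppeDepth.induct U ω with
  | case1 => rw [hoppeDepth]
  | case2 => rw [hoppeDepth_one]; omega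
  | case3 n ih => rw [hoppeDepth]; omega

theorem hoppeDepth_congr {Ω' : Type*} (V : ℕ → Ω' → ℕ) (ω : Ω) (ω' : Ω') (m : ℕ)
    (h : ∀ k, k + 2 ≤ m → U k ω = V k ω') : hoppeDepth U ω m = hoppeDepth V ω' m := by
  induction m using hoppeDepth.induct U ω with
  | case1 => rw [hoppeDepth, hoppeDepth]
  | case2 => rw [hoppeDepth_one, hoppeDepth_one]
  | case3 n ih =>
    rw [hoppeDepth, hoppeDepth, ih fun k hk => h k (by omega), h n le_rfl]

/-- The depth of node `j` read off the first `n` parent choices; factoring `hoppeDepth` through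
this function of countably many values gives its measurability and its independence of `U n`. -/
def hoppeDepthOfPrefix (n j : ℕ) (v : range n → ℕ) : ℕ :=
  hoppeDepth (fun k v => if hk : k ∈ range n then v ⟨k, hk⟩ else 0) v j

theorem hoppeDepth_eq_hoppeDepthOfPrefix {n j : ℕ} (hj : j ≤ n + 1) (ω : Ω) :
    hoppeDepth U ω j = hoppeDepthOfPrefix n j fun i => U i ω :=
  hoppeDepth_congr _ _ _ _ j fun k hk => by rw [dif_pos (mem_range.mpr (by omega))]

end Depth

section Measurability

variable {Ω : Type*} [MeasurableSpace Ω] {μ : Measure Ω} {U : ℕ → Ω → ℕ}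

theorem measurable_hoppeDepth (hmeas : ∀ k, Measurable (U k)) (j : ℕ) :
    Measurable fun ω => hoppeDepth U ω j := by
  simp_rw [hoppeDepth_eq_hoppeDepthOfPrefix U (Nat.le_succ j)]
  exact (measurable_of_countable (hoppeDepthOfPrefix j j)).comp
    (measurable_pi_lambda _ fun i => hmeas i)

theorem indepFun_hoppeDepth (hmeas : ∀ k, Measurable (U k)) (hind : iIndepFun U μ)
    {n j : ℕ} (hj : j ≤ n + 1) : IndepFun (U n) (fun ω => hoppeDepth U ω j) μ := by
  simp_rw [hoppeDepth_eq_hoppeDepthOfPrefix U hj]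
  exact (hind.indepFun_finset {n} (range n) (by simp) hmeas).comp
    (measurable_pi_apply (X := fun _ : ({n} : Finset ℕ) => ℕ) ⟨n, mem_singleton_self n⟩)
    (measurable_of_countable (hoppeDepthOfPrefix n j))

theorem integrable_comp_hoppeDepth [IsFiniteMeasure μ]
    (hmeas : ∀ k, Measurable (U k)) (ψ : ℕ → ℝ) (j : ℕ) :
    Integrable (fun ω => ψ (hoppeDepth U ω j)) μ :=
  .of_bound (measurable_from_nat.comp (measurable_hoppeDepth hmeas j)).aestronglyMeasurable
    (∑ k ∈ range (j + 1), |ψ k|) <| ae_of_all _ fun ω =>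
      single_le_sum (f := fun k => |ψ k|) (fun _ _ => abs_nonneg _)
        (mem_range.mpr (Nat.lt_succ_of_le (hoppeDepth_le U ω j)))

theorem memLp_hoppeDepth [IsFiniteMeasure μ] (hmeas : ∀ k, Measurable (U k))
    (p : ENNReal) (j : ℕ) : MemLp (fun ω => (hoppeDepth U ω j : ℝ)) p μ :=
  .of_bound (measurable_from_nat.comp (measurable_hoppeDepth hmeas j)).aestronglyMeasurable j <|
    ae_of_all _ fun ω => by simpa using hoppeDepth_le U ω j

end Measurability

namespace IsHoppeParents

variable {Ω : Type*} [MeasurableSpace Ω] {θ : ℝ} {μ : Measure Ω} {U : ℕ → Ω → ℕ}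

theorem ae_mem_Icc [IsProbabilityMeasure μ] (hU : IsHoppeParents θ μ U) (n : ℕ) :
    ∀ᵐ ω ∂μ, U n ω ∈ Icc 1 (n + 1) := by
  have hmeas : MeasurableSet {ω | 1 ≤ U n ω ∧ U n ω ≤ n + 1} :=
    hU.meas n (Set.to_countable {x : ℕ | 1 ≤ x ∧ x ≤ n + 1}).measurableSet
  simp_rw [mem_Icc]
  exact (ae_iff_measure_eq hmeas.nullMeasurableSet).mpr ((hU.range n).trans measure_univ.symm)

theorem measureReal_eq_one (hU : IsHoppeParents θ μ U) (hθ : 0 ≤ θ) (n : ℕ) :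
    μ.real {ω | U n ω = 1} = θ / (θ + n) := by
  rw [measureReal_def, hU.root n, ENNReal.toReal_ofReal (by positivity)]

theorem measureReal_eq_of_two_le (hU : IsHoppeParents θ μ U) (hθ : 0 ≤ θ) {n j : ℕ} (h2 : 2 ≤ j)
    (hj : j ≤ n + 1) : μ.real {ω | U n ω = j} = 1 / (θ + n) := by
  rw [measureReal_def, hU.nonroot n j h2 hj, ENNReal.toReal_ofReal (by positivity)]

variable [IsProbabilityMeasure μ]

theorem integral_hoppeDepth_add_two (hU : IsHoppeParents θ μ U) (ψ : ℕ → ℝ) (n : ℕ) :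
    ∫ ω, ψ (hoppeDepth U ω (n + 2)) ∂μ
      = ∑ j ∈ Icc 1 (n + 1), μ.real {ω | U n ω = j} * ∫ ω, ψ (hoppeDepth U ω j + 1) ∂μ := by
  rw [← integral_apply_eq_sum_of_indepFun (Y := fun j ω => ψ (hoppeDepth U ω j + 1)) (hU.meas n)
    (hU.ae_mem_Icc n) (fun j _ => integrable_comp_hoppeDepth hU.meas (fun k => ψ (k + 1)) j)
    fun j hj => by
      have := (indepFun_hoppeDepth hU.meas hU.indep (mem_Icc.mp hj).2).comp measurable_id
        (measurable_of_countable fun k => ψ (k + 1))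
      exact this]
  refine integral_congr_ae ?_
  filter_upwards [hU.ae_mem_Icc n] with ω hω
  rw [hoppeDepth_add_two_of_le U (mem_Icc.mp hω).2]

theorem mul_integral_hoppeDepth_add_two (hU : IsHoppeParents θ μ U) (hθ : 0 < θ) (ψ : ℕ → ℝ)
    (n : ℕ) :
    (θ + n) * ∫ ω, ψ (hoppeDepth U ω (n + 2)) ∂μ
      = θ * ψ 1 + ∑ j ∈ Icc 2 (n + 1), ∫ ω, ψ (hoppeDepth U ω j + 1) ∂μ := by
  rw [hU.integral_hoppeDepth_add_two, ← insert_Icc_add_one_left_eq_Icc (by omega : 1 ≤ n + 1),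
    sum_insert (by simp), hU.measureReal_eq_one hθ.le,
    sum_congr rfl fun j hj => by
      rw [hU.measureReal_eq_of_two_le hθ.le (mem_Icc.mp hj).1 (mem_Icc.mp hj).2],
    ← mul_sum]
  simp_rw [hoppeDepth_one, integral_const, probReal_univ, zero_add, one_smul]
  field_simp
  rfl

theorem integral_hoppeDepth_add_three (hU : IsHoppeParents θ μ U) (hθ : 0 < θ) (ψ : ℕ → ℝ)
    (n : ℕ) :
    ∫ ω, ψ (hoppeDepth U ω (n + 3)) ∂μ
      = ∫ ω, ψ (hoppeDepth U ω (n + 2)) ∂μ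
        + (∫ ω, ψ (hoppeDepth U ω (n + 2) + 1) ∂μ - ∫ ω, ψ (hoppeDepth U ω (n + 2)) ∂μ)
          / (θ + (n + 1)) := by
  have h₀ := hU.mul_integral_hoppeDepth_add_two hθ ψ n
  have h₁ := hU.mul_integral_hoppeDepth_add_two hθ ψ (n + 1)
  rw [sum_Icc_succ_top (by omega : 2 ≤ n + 1 + 1)] at h₁
  push_cast at h₁
  have : θ + (n + 1) ≠ 0 := by positivity
  field_simp
  linarith

theorem integral_hoppeDepth (hU : IsHoppeParents θ μ U) (hθ : 0 < θ) (n : ℕ) :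
    ∫ ω, (hoppeDepth U ω (n + 2) : ℝ) ∂μ = 1 + ∑ i ∈ Icc 1 n, 1 / (θ + i) := by
  induction n with
  | zero => simp [hoppeDepth_two]
  | succ n ih =>
    have h := hU.integral_hoppeDepth_add_three hθ (fun k => (k : ℝ)) n
    simp only [Nat.cast_add, Nat.cast_one] at h
    rw [h, integral_add (integrable_comp_hoppeDepth hU.meas _ _) (integrable_const 1), ih,
      sum_Icc_succ_top (by omega : 1 ≤ n + 1)]
    simp only [integral_const, probReal_univ, one_smul, Nat.cast_add, Nat.cast_one]
    ring

theorem integral_hoppeDepth_sq (hU : IsHoppeParents θ μ U) (hθ : 0 < θ) (n : ℕ) :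
    ∫ ω, (hoppeDepth U ω (n + 2) : ℝ) ^ 2 ∂μ
      = (1 + ∑ i ∈ Icc 1 n, 1 / (θ + i)) ^ 2
        + ∑ i ∈ Icc 1 n, (1 / (θ + i) - (1 / (θ + i)) ^ 2) := by
  induction n with
  | zero => simp [hoppeDepth_two]
  | succ n ih =>
    have h := hU.integral_hoppeDepth_add_three hθ (fun k => (k : ℝ) ^ 2) n
    have hsq : ∀ x : ℝ, (x + 1) ^ 2 = x ^ 2 + (2 * x + 1) := fun x => by ring
    simp only [Nat.cast_add, Nat.cast_one, hsq] at h
    rw [h, integral_add (integrable_comp_hoppeDepth hU.meas (fun k => (k : ℝ) ^ 2) _)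
        (integrable_comp_hoppeDepth hU.meas (fun k => 2 * (k : ℝ) + 1) _),
      integral_add ((integrable_comp_hoppeDepth hU.meas _ _).const_mul 2) (integrable_const 1),
      integral_const_mul, hU.integral_hoppeDepth hθ, ih, sum_Icc_succ_top (by omega : 1 ≤ n + 1),
      sum_Icc_succ_top (by omega : 1 ≤ n + 1)]
    simp only [integral_const, probReal_univ, one_smul, Nat.cast_add, Nat.cast_one]
    ring

end IsHoppeParents

/-- Variance of the depth of the `n`-th node of a Hoppe tree with parameter `θ`. -/
theorem hoppe_depth_variance
    {Ω : Type*} [MeasurableSpace Ω]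
    (θ : ℝ) (hθ : 0 < θ) (n : ℕ) (hn : 2 ≤ n)
    (μ : Measure Ω) [IsProbabilityMeasure μ] (U : ℕ → Ω → ℕ) (hU : IsHoppeParents θ μ U) :
    variance (fun ω => (hoppeDepth U ω n : ℝ)) μ
      = ∑ i ∈ Finset.Icc 1 (n - 2), 1 / (θ + i)
        - ∑ i ∈ Finset.Icc 1 (n - 2), (1 / (θ + i)) ^ 2 := by
  obtain ⟨n, rfl⟩ := Nat.exists_eq_add_of_le' hn
  rw [variance_eq_sub (memLp_hoppeDepth hU.meas 2 _)]
  simp only [Pi.pow_apply]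
  rw [hU.integral_hoppeDepth_sq hθ, hU.integral_hoppeDepth hθ, Nat.add_sub_cancel,
    ← sum_sub_distrib]
  ring
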